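/- Let α ∈ Π_aff^{re,+} with α > c. Then there exist k ≥ 1 and affine positive real roots β_1, …, β_k, each with β_i < c, such that s_α = s_{β_1} s_{β_2} ⋯ s_{β_k} and Σ_{i=1}^{k} β_i = α. -/

import Mathlib

open scoped BigOperators

namespace AffA

/-- Elements `⟨w, λ⟩` representing `w · t_λ` in the affine Weyl group
`W_aff = W ⋉ Q∨` of type `A_{n-1}^{(1)}`; the translation part `λ` is recorded
in `ε`-coordinates. -/
@[ext]
structure Aff (n : ℕ) where
  w : Equiv.Perm (Fin n)
  t : Fin n → ℤ

namespace Aff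

variable {n : ℕ}

instance : Nonempty (Aff n) := ⟨⟨1, 0⟩⟩

/-- multiplication: `(w t_λ)(v t_μ) = (wv) t_{v⁻¹λ + μ}`. -/
def mul' (x y : Aff n) : Aff n := ⟨x.w * y.w, fun i => x.t (y.w i) + y.t i⟩

def inv' (x : Aff n) : Aff n := ⟨x.w⁻¹, fun i => - x.t (x.w⁻¹ i)⟩

instance : Group (Aff n) where
  mul := mul'
  one := ⟨1, 0⟩
  inv := inv'
  mul_assoc a b c := by
    show mul' (mul' a b) c = mul' a (mul' b c)
    simp only [mul', Aff.mk.injEq]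
    refine ⟨mul_assoc _ _ _, funext fun i => ?_⟩
    simp [Equiv.Perm.mul_apply, add_assoc]
  one_mul a := by
    obtain ⟨aw, av⟩ := a
    show mul' ⟨1, 0⟩ ⟨aw, av⟩ = ⟨aw, av⟩
    simp only [mul', Aff.mk.injEq]
    exact ⟨one_mul _, funext fun i => by simp⟩
  mul_one a := by
    obtain ⟨aw, av⟩ := a
    show mul' ⟨aw, av⟩ ⟨1, 0⟩ = ⟨aw, av⟩
    simp only [mul', Aff.mk.injEq]
    exact ⟨mul_one _, funext fun i => by simp⟩
  inv_mul_cancel a := by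
    obtain ⟨aw, av⟩ := a
    show mul' (inv' ⟨aw, av⟩) ⟨aw, av⟩ = ⟨1, 0⟩
    simp only [mul', inv', Aff.mk.injEq]
    exact ⟨inv_mul_cancel _, funext fun i => by simp⟩

/-- cyclic successor on the vertices `α_0, …, α_{n-1}` of the affine Dynkin diagram. -/
def fsucc (i : Fin n) : Fin n :=
  ⟨(i.val + 1) % n, Nat.mod_lt _ (Nat.lt_of_le_of_lt (Nat.zero_le _) i.isLt)⟩

/-- the coefficient of `α_0`. -/
def coeff0 (a : Fin n → ℤ) : ℤ := if h : 0 < n then a ⟨0, h⟩ else 0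

/-- the `ε`-coordinates of the finite part of an element of the affine root
lattice written in the coordinates of the simple roots `α_0, …, α_{n-1}`
(`δ` is sent to `0`). -/
def finPart (a : Fin n → ℤ) : Fin n → ℤ := fun i => a (fsucc i) - a i

/-- `c = δ = α_0 + α_1 + ⋯ + α_{n-1}`, in simple root coordinates. -/
def cvec (n : ℕ) : Fin n → ℤ := fun _ => 1

/-- the affine Cartan matrix of type `A_{n-1}^{(1)}` (for `n ≥ 3`). -/
def cartan (i j : Fin n) : ℤ :=
  if i = j then 2 else if j = fsucc i ∨ i = fsucc j then -1 else 0

/-- the natural pairing `⟨a, b∨⟩` of elements of the affine root lattice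
(simple root coordinates). -/
def pairing (a b : Fin n → ℤ) : ℤ := ∑ i : Fin n, ∑ j : Fin n, a i * cartan i j * b j

/-- real roots of the affine root system: lattice vectors of norm `2`. -/
def IsRealRoot (a : Fin n → ℤ) : Prop := pairing a a = 2

/-- affine positive real roots: real roots with nonnegative coordinates. -/
def IsPosRoot (a : Fin n → ℤ) : Prop := IsRealRoot a ∧ ∀ i, 0 ≤ a i

/-- perpendicularity of affine roots. -/
def Perp (a b : Fin n → ℤ) : Prop := pairing a b = 0

/-- the support of an affine root. -/
def supp (a : Fin n → ℤ) : Finset (Fin n) := Finset.univ.filter fun i => a i ≠ 0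

/-- the supports of `a` and `b` are disconnected in the affine Dynkin diagram
(a cycle on `α_0, …, α_{n-1}`): no vertex of one is equal or adjacent to a
vertex of the other. -/
def Disconn (a b : Fin n → ℤ) : Prop :=
  ∀ i j : Fin n, a i ≠ 0 → b j ≠ 0 → i ≠ j ∧ j ≠ fsucc i ∧ i ≠ fsucc j

/-- for roots `a, b < c` (0–1 vectors), `a ∩ b = Σ_{α_i ∈ supp a ∩ supp b} α_i`. -/
def inter (a b : Fin n → ℤ) : Fin n → ℤ :=
  fun i => if a i ≠ 0 ∧ b i ≠ 0 then 1 else 0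

instance : Nonempty (Equiv.Perm (Fin n)) := ⟨1⟩

/-- the reflection `s_β = s_α t_{mα}` associated to the real root `β = α + mδ`
(given in simple root coordinates). -/
noncomputable def sref (a : Fin n → ℤ) : Aff n :=
  ⟨Classical.epsilon fun w : Equiv.Perm (Fin n) => ∃ p q : Fin n,
      finPart a = Pi.single p 1 - Pi.single q 1 ∧ w = Equiv.swap p q,
    fun i => coeff0 a * finPart a i⟩

/-- the simple reflections `s_0, …, s_{n-1}`. -/
noncomputable def simple (i : Fin n) : Aff n := sref (Pi.single i 1)

/-- the Coxeter length, via the Iwahori–Matsumoto formula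
`ℓ(w t_λ) = Σ_{γ ∈ Π⁺} |χ(w·γ < 0) + ⟨λ, γ⟩|`. -/
def len (x : Aff n) : ℕ :=
  ∑ p : Fin n, ∑ q : Fin n,
    if p < q then ((if x.w q < x.w p then (1 : ℤ) else 0) + (x.t p - x.t q)).natAbs else 0

/-- translation `t_v` by an element `v` of the (co)root lattice given in
`ε`-coordinates. -/
def trE (v : Fin n → ℤ) : Aff n := ⟨1, v⟩

/-- a Bruhat step: an edge of the moment graph which increases the length. -/
def bstep (u v : Aff n) : Prop :=
  (∃ a, IsPosRoot a ∧ v = u * sref a) ∧ len u < len v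

/-- the Bruhat order: `u ≤ v` iff there is an increasing chain from `u` to `v`
in the moment graph. -/
def ble (u v : Aff n) : Prop := Relation.ReflTransGen bstep u v

/-- there is a chain in the moment graph from `u` to `v` of total degree `≤ d`. -/
def ChainTo (d : Fin n → ℤ) (u v : Aff n) : Prop :=
  ∃ l : List (Fin n → ℤ),
    (∀ b ∈ l, IsPosRoot b) ∧ l.sum ≤ d ∧ v = u * (l.map sref).prod

/-- the set of elements reachable from some `u' ≤ u` by a chain of degree `≤ d`. -/
def nbhdSet (d : Fin n → ℤ) (u : Aff n) : Set (Aff n) :=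
  {v | ∃ u', ble u' u ∧ ChainTo d u' v}

/-- the combinatorial curve neighborhood `Γ_d(u)`: the Bruhat-maximal elements
among those reachable from some `u' ≤ u` by a chain of degree `≤ d`. -/
def curveNbhd (d : Fin n → ℤ) (u : Aff n) : Set (Aff n) :=
  {v | v ∈ nbhdSet d u ∧ ∀ x ∈ nbhdSet d u, ble v x → x = v}

/-- one step of the Hecke product. -/
noncomputable def heckeStep (u : Aff n) (i : Fin n) : Aff n :=
  if len u < len (u * simple i) then u * simple i else u

/-- the Hecke product `u · v`: multiply `u` on the right, left to right, by the
letters of a reduced word for `v`. -/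
noncomputable def heckeMul (u v : Aff n) : Aff n :=
  (Classical.epsilon fun l : List (Fin n) =>
      (l.map simple).prod = v ∧ l.length = len v).foldl heckeStep u

/-- the Hecke product `s_{β_1} · s_{β_2} · ⋯ · s_{β_r}` of the reflections of a
list of roots. -/
noncomputable def heckeList (l : List (Fin n → ℤ)) : Aff n :=
  l.foldl (fun u b => heckeMul u (sref b)) 1

/-- the defining recursion for `z_d`: `z_0 = id` and `z_d = s_α · z_{d-α}`
(Hecke product), where `α` is any maximal root with `α ≤ d`. -/
inductive IsZ : (Fin n → ℤ) → Aff n → Prop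
  | zero : IsZ 0 1
  | step {d a : Fin n → ℤ} {x : Aff n} :
      IsPosRoot a → a ≤ d →
      (∀ b, IsPosRoot b → b ≤ d → a ≤ b → b = a) →
      IsZ (d - a) x → IsZ d (heckeMul (sref a) x)

end Aff
end AffA

/-!
For `n ≥ 3` the pairing is `pairing a b = ∑ i, finPart a i * finPart b i`, and `finPart` sums to
zero, so the finite part of a real root `α` is `ε_p - ε_q`. Hence `α = b + K δ`, where `b` is the
arc root `α_{p+1} + ⋯ + α_q` (indices mod `n`) and `K ≥ 0`. The complementary arc `b' = δ - b` is
again a root below `δ`, and `s_{b'} s_b` is the translation `t_{ε_p - ε_q}`. Since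
`s_{b + Kδ} = s_b t_{K(ε_p - ε_q)}`, this gives `s_α = s_b (s_{b'} s_b)^K` with
`b + K (b' + b) = α`.
-/

namespace AffA.Aff

variable {n : ℕ}

@[simp] lemma w_mul (x y : Aff n) : (x * y).w = x.w * y.w := rfl

@[simp] lemma t_mul (x y : Aff n) (i : Fin n) : (x * y).t i = x.t (y.w i) + y.t i := rfl

lemma trE_mul (u v : Fin n → ℤ) : trE u * trE v = trE (u + v) := rfl

lemma trE_pow (v : Fin n → ℤ) (k : ℕ) : trE v ^ k = trE (k • v) := by
  induction k with
  | zero => rw [pow_zero, zero_nsmul]; rfl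
  | succ k ih => rw [pow_succ, ih, trE_mul, succ_nsmul]

lemma fsucc_val (i : Fin n) : (fsucc i : ℕ) = if (i : ℕ) + 1 = n then 0 else (i : ℕ) + 1 := by
  have := i.isLt
  split_ifs with h
  · simp [fsucc, h]
  · exact Nat.mod_eq_of_lt (by omega)

lemma fsucc_eq_finRotate (i : Fin n) : fsucc i = finRotate n i := by
  obtain ⟨m, rfl⟩ : ∃ m, n = m + 1 := Nat.exists_eq_succ_of_ne_zero (Fin.pos i).ne'
  have := i.isLt
  ext
  simp only [fsucc_val, coe_finRotate, Fin.ext_iff, Fin.val_last]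
  split_ifs <;> omega

lemma fsucc_ne_self (hn : 2 ≤ n) (i : Fin n) : fsucc i ≠ i := by
  intro h
  have := congrArg Fin.val h
  rw [fsucc_val] at this
  split_ifs at this <;> omega

lemma fsucc_fsucc_ne_self (hn : 3 ≤ n) (i : Fin n) : fsucc (fsucc i) ≠ i := by
  intro h
  have := congrArg Fin.val h
  have hi := i.isLt
  rw [fsucc_val, fsucc_val] at this
  split_ifs at this <;> omega

lemma fsucc_castSucc {m : ℕ} (i : Fin m) : fsucc i.castSucc = i.succ := by
  ext
  rw [fsucc_val, if_neg (by rw [Fin.val_castSucc]; omega), Fin.val_castSucc, Fin.val_succ]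

lemma finPart_sub (a b : Fin n → ℤ) : finPart (a - b) = finPart a - finPart b := by
  ext i
  simp only [finPart, Pi.sub_apply]
  ring

lemma finPart_cvec : finPart (cvec n) = 0 := by
  ext i
  simp [finPart, cvec]

lemma finPart_add_smul_cvec (a : Fin n → ℤ) (k : ℤ) : finPart (a + k • cvec n) = finPart a := by
  ext i
  simp [finPart, cvec]

lemma sum_finPart (a : Fin n → ℤ) : ∑ i, finPart a i = 0 := by
  simp only [finPart, Finset.sum_sub_distrib, fsucc_eq_finRotate,
    Equiv.sum_comp (finRotate n) a, sub_self]

lemma eq_const_of_finPart_eq_zero {x : Fin n → ℤ} (hx : finPart x = 0) (i j : Fin n) :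
    x i = x j := by
  obtain ⟨m, rfl⟩ : ∃ m, n = m + 1 := Nat.exists_eq_succ_of_ne_zero (Fin.pos i).ne'
  suffices h : ∀ i, x i = x 0 by rw [h i, h j]
  intro i
  induction i using Fin.induction with
  | zero => rfl
  | succ i ih =>
    have := congrFun hx i.castSucc
    simp only [finPart, fsucc_castSucc, Pi.zero_apply] at this
    omega

lemma eq_add_smul_cvec_of_finPart_eq {a b : Fin n → ℤ} (h : finPart a = finPart b) (j : Fin n) :
    a = b + (a j - b j) • cvec n := by
  have hconst := eq_const_of_finPart_eq_zero (x := a - b) (by rw [finPart_sub, h, sub_self])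
  ext i
  have := hconst i j
  simp only [Pi.sub_apply] at this
  simp only [Pi.add_apply, Pi.smul_apply, cvec, smul_eq_mul, mul_one]
  omega

lemma cartan_eq_ite (hn : 3 ≤ n) (i j : Fin n) :
    cartan i j = 2 * (if i = j then 1 else 0) - (if j = fsucc i then 1 else 0)
      - (if i = fsucc j then 1 else 0) := by
  unfold cartan
  by_cases hij : i = j
  · subst hij
    have := fsucc_ne_self (by omega) i
    simp [this.symm]
  by_cases hj : j = fsucc i
  · subst hj
    have := fsucc_fsucc_ne_self hn i
    simp [hij, this.symm]
  · by_cases hi : i = fsucc j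
    · rw [if_neg hij, if_pos (Or.inr hi), if_neg hij, if_neg hj, if_pos hi]
      norm_num
    · simp [hij, hj, hi]

lemma pairing_eq_sum_finPart_mul (hn : 3 ≤ n) (a b : Fin n → ℤ) :
    pairing a b = ∑ i, finPart a i * finPart b i := by
  have hrot : ∑ i, a (fsucc i) * b (fsucc i) = ∑ i, a i * b i := by
    simp only [fsucc_eq_finRotate]
    exact Equiv.sum_comp (finRotate n) fun i => a i * b i
  have hpairing : pairing a b
      = 2 * ∑ i, a i * b i - ∑ i, a i * b (fsucc i) - ∑ i, a (fsucc i) * b i := by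
    simp only [pairing, cartan_eq_ite hn, mul_sub, sub_mul, Finset.sum_sub_distrib]
    rw [Finset.sum_comm (f := fun i j => a i * (if i = fsucc j then 1 else 0) * b j)]
    simp only [mul_ite, ite_mul, mul_one, mul_zero, zero_mul, Finset.sum_ite_eq,
      Finset.sum_ite_eq', Finset.mem_univ, if_true, Finset.mul_sum]
    ring_nf
  have hfin : ∑ i, finPart a i * finPart b i
      = ∑ i, a (fsucc i) * b (fsucc i) - ∑ i, a (fsucc i) * b i - ∑ i, a i * b (fsucc i)
        + ∑ i, a i * b i := by
    simp only [finPart, sub_mul, mul_sub, Finset.sum_sub_distrib]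
    ring
  rw [hpairing, hfin, hrot]
  ring

lemma isRealRoot_iff (hn : 3 ≤ n) {a : Fin n → ℤ} :
    IsRealRoot a ↔ ∑ i, finPart a i ^ 2 = 2 := by
  simp only [IsRealRoot, pairing_eq_sum_finPart_mul hn, sq]

section SingleSubSingle

variable {ι : Type*} [DecidableEq ι]

lemma exists_eq_single_sub_single [Fintype ι] {d : ι → ℤ}
    (h2 : ∑ i, d i ^ 2 = 2) (h0 : ∑ i, d i = 0) :
    ∃ p q, p ≠ q ∧ d = Pi.single p 1 - Pi.single q 1 := by
  have hle : ∀ s : Finset ι, ∑ i ∈ s, d i ^ 2 ≤ 2 := fun s =>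
    h2 ▸ Finset.sum_le_sum_of_subset_of_nonneg (Finset.subset_univ s) fun i _ _ => sq_nonneg (d i)
  obtain ⟨p, hp⟩ : ∃ p, 0 < d p := by
    by_contra! h
    have hzero := (Finset.sum_eq_zero_iff_of_nonpos fun i _ => h i).mp h0
    simp [hzero] at h2
  obtain ⟨q, hq⟩ : ∃ q, d q < 0 := by
    by_contra! h
    have := (Finset.sum_eq_zero_iff_of_nonneg fun i _ => h i).mp h0 p (Finset.mem_univ p)
    omega
  have hpq : p ≠ q := by rintro rfl; omega
  have hpair := hle {p, q}
  rw [Finset.sum_pair hpq] at hpair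
  have hdp : d p = 1 := by nlinarith
  have hdq : d q = -1 := by nlinarith
  refine ⟨p, q, hpq, funext fun i => ?_⟩
  by_cases hip : i = p
  · subst hip
    simp [hpq, hdp]
  by_cases hiq : i = q
  · subst hiq
    simp [hip, hdq]
  have htriple := hle {i, p, q}
  rw [Finset.sum_insert (by simp [hip, hiq]), Finset.sum_pair hpq, hdp, hdq] at htriple
  have hdi : d i = 0 := by nlinarith
  simp [hip, hiq, hdi]

lemma eq_of_single_sub_single_eq {p q p' q' : ι} (hpq : p ≠ q)
    (h : (Pi.single p 1 - Pi.single q 1 : ι → ℤ) = Pi.single p' 1 - Pi.single q' 1) :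
    p' = p ∧ q' = q := by
  have hp := congrFun h p
  have hq := congrFun h q
  simp only [Pi.sub_apply, Pi.single_apply] at hp hq
  split_ifs at hp hq <;> simp_all

lemma sum_sq_single_sub_single [Fintype ι] {p q : ι} (hpq : p ≠ q) :
    ∑ i, (Pi.single p 1 - Pi.single q 1 : ι → ℤ) i ^ 2 = 2 := by
  have hsq : ∀ i, (Pi.single p 1 - Pi.single q 1 : ι → ℤ) i ^ 2
      = (Pi.single p 1 : ι → ℤ) i + (Pi.single q 1 : ι → ℤ) i := by
    intro i
    by_cases hip : i = p
    · subst hip; simp [hpq]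
    · by_cases hiq : i = q
      · subst hiq; simp [hip]
      · simp [hip, hiq]
  simp only [hsq, Finset.sum_add_distrib, Finset.sum_pi_single', Finset.mem_univ, if_true]
  norm_num

lemma single_sub_single_swap (p q i : ι) :
    (Pi.single q 1 - Pi.single p 1 : ι → ℤ) (Equiv.swap p q i)
      = (Pi.single p 1 - Pi.single q 1 : ι → ℤ) i := by
  have hp := congrFun (Pi.single_comp_equiv (α := ℤ) (Equiv.swap p q) p 1) i
  have hq := congrFun (Pi.single_comp_equiv (α := ℤ) (Equiv.swap p q) q 1) i
  simp only [Function.comp_apply, Equiv.symm_swap, Equiv.swap_apply_left,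
    Equiv.swap_apply_right] at hp hq
  simp only [Pi.sub_apply, hp, hq]

end SingleSubSingle

lemma sref_w {a : Fin n → ℤ} {p q : Fin n} (hpq : p ≠ q)
    (h : finPart a = Pi.single p 1 - Pi.single q 1) : (sref a).w = Equiv.swap p q := by
  obtain ⟨p', q', h', hw⟩ := Classical.epsilon_spec (p := fun w : Equiv.Perm (Fin n) =>
    ∃ p q : Fin n, finPart a = Pi.single p 1 - Pi.single q 1 ∧ w = Equiv.swap p q) ⟨_, p, q, h, rfl⟩
  obtain ⟨rfl, rfl⟩ := eq_of_single_sub_single_eq hpq (h.symm.trans h')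
  exact hw

@[simp] lemma sref_t (a : Fin n → ℤ) (i : Fin n) : (sref a).t i = coeff0 a * finPart a i := rfl

lemma coeff0_add_smul_cvec (hn : 0 < n) (a : Fin n → ℤ) (k : ℤ) :
    coeff0 (a + k • cvec n) = coeff0 a + k := by
  simp [coeff0, hn, cvec]

lemma sref_add_smul_cvec (a : Fin n → ℤ) (k : ℤ) :
    sref (a + k • cvec n) = sref a * trE (k • finPart a) := by
  refine Aff.ext ?_ (funext fun i => ?_)
  · simp only [w_mul, trE, mul_one, sref, finPart_add_smul_cvec]
  · simp only [t_mul, sref_t, trE, coeff0_add_smul_cvec (Fin.pos i), finPart_add_smul_cvec,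
      Equiv.Perm.one_apply, Pi.smul_apply, smul_eq_mul]
    ring

lemma sref_mul_sref_of_add_eq_cvec {a b : Fin n → ℤ} {p q : Fin n} (hpq : p ≠ q)
    (ha : finPart a = Pi.single p 1 - Pi.single q 1) (hab : a + b = cvec n) :
    sref b * sref a = trE (finPart a) := by
  have hb : finPart b = Pi.single q 1 - Pi.single p 1 := by
    rw [eq_sub_of_add_eq' hab, finPart_sub, finPart_cvec, ha]
    abel
  refine Aff.ext ?_ (funext fun i => ?_)
  · rw [w_mul, sref_w hpq.symm hb, sref_w hpq ha, Equiv.swap_comm, Equiv.swap_mul_self]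
    rfl
  · have hcoeff : coeff0 a + coeff0 b = 1 := by
      simpa [coeff0, Fin.pos i, cvec] using congrFun hab ⟨0, Fin.pos i⟩
    simp only [t_mul, sref_t, sref_w hpq ha, hb, single_sub_single_swap, ha, trE]
    linear_combination (Pi.single p 1 - Pi.single q 1 : Fin n → ℤ) i * hcoeff

/-- The indicator of the cyclic interval `(p, q]`, i.e. the root `α_{p+1} + ⋯ + α_q`. -/
def arc (p q : Fin n) : Fin n → ℤ := fun i =>
  if (p < i ∧ i ≤ q) ∨ (q < p ∧ (p < i ∨ i ≤ q)) then 1 else 0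

lemma arc_apply_left (p q : Fin n) : arc p q p = 0 := by
  simp only [arc, ite_eq_right_iff]
  omega

lemma finPart_arc {p q : Fin n} (hpq : p ≠ q) :
    finPart (arc p q) = Pi.single p 1 - Pi.single q 1 := by
  ext i
  have hi := fsucc_val i
  simp only [finPart, arc, Pi.sub_apply, Pi.single_apply, Fin.lt_def, Fin.le_def, Fin.ext_iff] at hi ⊢
  have := i.isLt
  have := Fin.val_ne_of_ne hpq
  split_ifs at hi ⊢ <;> omega

lemma arc_add_arc {p q : Fin n} (hpq : p ≠ q) : arc p q + arc q p = cvec n := by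
  ext i
  have := Fin.val_ne_of_ne hpq
  simp only [arc, cvec, Pi.add_apply, Fin.lt_def, Fin.le_def]
  split_ifs <;> omega

lemma arc_nonneg (p q i : Fin n) : 0 ≤ arc p q i := by
  unfold arc
  split_ifs <;> simp

lemma isPosRoot_arc (hn : 3 ≤ n) {p q : Fin n} (hpq : p ≠ q) : IsPosRoot (arc p q) :=
  ⟨(isRealRoot_iff hn).2 (finPart_arc hpq ▸ sum_sq_single_sub_single hpq), arc_nonneg p q⟩

lemma arc_lt_cvec {p q : Fin n} (hpq : p ≠ q) : arc p q < cvec n := by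
  refine lt_of_le_of_ne (fun i => ?_) fun h => ?_
  · rw [← arc_add_arc hpq, Pi.add_apply]
    exact le_add_of_nonneg_right (arc_nonneg q p i)
  · simpa [arc_apply_left, cvec] using congrFun h p

def arcFactors (p q : Fin n) (K : ℕ) : List (Fin n → ℤ) :=
  arc p q :: (List.replicate K [arc q p, arc p q]).flatten

lemma mem_arcFactors {p q : Fin n} {K : ℕ} {b : Fin n → ℤ} (hb : b ∈ arcFactors p q K) :
    b = arc p q ∨ b = arc q p := by
  simp only [arcFactors, List.mem_cons, List.mem_flatten, List.mem_replicate] at hb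
  aesop

lemma sum_arcFactors {p q : Fin n} (hpq : p ≠ q) (K : ℕ) :
    (arcFactors p q K).sum = arc p q + K • cvec n := by
  simp [arcFactors, List.sum_flatten, List.sum_replicate, add_comm (arc q p), arc_add_arc hpq]

lemma prod_map_sref_arcFactors {p q : Fin n} (hpq : p ≠ q) (K : ℕ) :
    ((arcFactors p q K).map sref).prod = sref (arc p q + K • cvec n) := by
  have htr := sref_mul_sref_of_add_eq_cvec hpq (finPart_arc hpq) (arc_add_arc hpq)
  calc ((arcFactors p q K).map sref).prod
      = sref (arc p q) * (sref (arc q p) * sref (arc p q)) ^ K := by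
        simp [arcFactors, List.map_flatten, List.prod_flatten, List.prod_replicate]
    _ = sref (arc p q) * trE ((K : ℤ) • finPart (arc p q)) := by
        rw [htr, trE_pow, natCast_zsmul]
    _ = sref (arc p q + K • cvec n) := by
        rw [← natCast_zsmul, sref_add_smul_cvec]

end AffA.Aff

open AffA Aff in
theorem sref_factorization_general (n : ℕ) (hn : 3 ≤ n) (α : Fin n → ℤ)
    (hα : IsPosRoot α) :
    ∃ l : List (Fin n → ℤ), l ≠ [] ∧ (∀ b ∈ l, IsPosRoot b ∧ b < cvec n) ∧
      sref α = (l.map sref).prod ∧ l.sum = α := by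
  obtain ⟨p, q, hpq, hα_fin⟩ :=
    exists_eq_single_sub_single ((isRealRoot_iff hn).1 hα.1) (sum_finPart α)
  obtain ⟨K, hK⟩ := Int.eq_ofNat_of_zero_le (hα.2 p)
  have hα_arc : α = arc p q + K • cvec n := by
    have := eq_add_smul_cvec_of_finPart_eq (hα_fin.trans (finPart_arc hpq).symm) p
    rwa [arc_apply_left, sub_zero, hK, natCast_zsmul] at this
  refine ⟨arcFactors p q K, List.cons_ne_nil _ _, fun b hb => ?_, ?_, ?_⟩
  · rcases mem_arcFactors hb with rfl | rfl
    · exact ⟨isPosRoot_arc hn hpq, arc_lt_cvec hpq⟩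
    · exact ⟨isPosRoot_arc hn hpq.symm, arc_lt_cvec hpq.symm⟩
  · rw [prod_map_sref_arcFactors hpq, ← hα_arc]
  · rw [sum_arcFactors hpq, ← hα_arc]

open AffA Aff in
/-- for `α > c` a positive real root, `s_α` is a product of
reflections in positive real roots `β_i < c` with `Σ β_i = α`. -/
theorem sref_factorization (n : ℕ) (hn : 3 ≤ n) (α : Fin n → ℤ)
    (hα : IsPosRoot α) (hαc : cvec n < α) :
    ∃ l : List (Fin n → ℤ), l ≠ [] ∧ (∀ b ∈ l, IsPosRoot b ∧ b < cvec n) ∧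
      sref α = (l.map sref).prod ∧ l.sum = α :=
  sref_factorization_general n hn α hα
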